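/- arXiv:2306.05538 — 2 statements merged into one kernel-verified Lean document; each statement's English description precedes it below -/
import Mathlib

section
/- Let v_0,…,v_k ∈ ℝ_{≥0}×ℝⁿ be linearly independent vectors such that the first coordinate of v_0 is positive. For 0 ≤ i ≤ k let C_i be the cone generated by v_0,…,v_i and let P_i = {x ∈ ℝⁿ : (1,x) ∈ C_i} (so P_• = (P_0 ⊆ ⋯ ⊆ P_k) is a flag of polyhedra in ℝⁿ). Let U be a Γ-rational polyhedron in ℝⁿ. Then the following are equivalent: (a) there exist finitely many pairs (γ_1,u_1),…,(γ_q,u_q) ∈ Γ×ℤⁿ such that (⟨v_0,(γ_l,u_l)⟩,…,⟨v_k,(γ_l,u_l)⟩) ≤_lex (0,…,0) for every 1 ≤ l ≤ q and {x ∈ ℝⁿ : γ_l + ⟨x,u_l⟩ ≤ 0 for all 1 ≤ l ≤ q} ⊆ U; (b) U meets the relative interior of P_i for every 0 ≤ i ≤ k. -/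
open Finset

noncomputable section

/-- The pairing `⟨w,𝔲⟩ = rγ + ⟨x,u⟩` on `ℝ × ℝⁿ`. -/
def pairE {n : ℕ} (w u : ℝ × (Fin n → ℝ)) : ℝ :=
  w.1 * u.1 + ∑ i, w.2 i * u.2 i

/-- The standard pairing between `ℝⁿ` and `ℤⁿ`. -/
def pairZ {n : ℕ} (x : Fin n → ℝ) (u : Fin n → ℤ) : ℝ :=
  ∑ i, x i * (u i : ℝ)

/-- The cone generated by finitely many vectors. -/
def coneGen {V : Type*} [AddCommMonoid V] [Module ℝ V] {r : ℕ} (v : Fin r → V) : Set V :=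
  {x | ∃ lam : Fin r → ℝ, (∀ j, 0 ≤ lam j) ∧ x = ∑ j, lam j • v j}

/-- The cone generated by `v 0, …, v i` (out of the family `v`). -/
def coneGenUpTo {V : Type*} [AddCommMonoid V] [Module ℝ V] {r : ℕ} (v : Fin r → V) (i : ℕ) :
    Set V :=
  {x | ∃ lam : Fin r → ℝ, (∀ j, 0 ≤ lam j) ∧ (∀ j : Fin r, i < (j : ℕ) → lam j = 0) ∧
    x = ∑ j, lam j • v j}

/-- A strongly convex polyhedral cone: finitely generated and containing no line. -/
def IsSCPCone {V : Type*} [AddCommGroup V] [Module ℝ V] (C : Set V) : Prop :=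
  (∃ r : ℕ, ∃ v : Fin r → V, C = coneGen v) ∧ ∀ x ∈ C, -x ∈ C → x = 0

/-- The dimension of a subset of a vector space: dimension of its linear span. -/
def spanDim {V : Type*} [AddCommGroup V] [Module ℝ V] (C : Set V) : ℕ :=
  Module.finrank ℝ (Submodule.span ℝ C)

/-- `flagPrev C i` is `C (i-1)`, with the convention `C (-1) = {0}`. -/
def flagPrev {V : Type*} [Zero V] (C : ℕ → Set V) : ℕ → Set V
  | 0 => {0}
  | (i + 1) => C i

/-- A flag of cones `C 0 ⊆ ⋯ ⊆ C k` in `ℝ≥0 × ℝⁿ`, with `dim (C i) = i + 1`. -/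
def IsFlagOfCones (n k : ℕ) (C : ℕ → Set (ℝ × (Fin n → ℝ))) : Prop :=
  (∀ i ≤ k, IsSCPCone (C i)) ∧
  (∀ i ≤ k, C i ⊆ {w | 0 ≤ w.1}) ∧
  (∀ i ≤ k, spanDim (C i) = i + 1) ∧
  (∀ i, i + 1 ≤ k → C i ⊆ C (i + 1))

/-- A simplicial flag of cones: a flag of cones in which `C i` is generated by
`v 0, …, v i` for a linearly independent family `v`. -/
def IsSimplicialFlagOfCones (n k : ℕ) (C : ℕ → Set (ℝ × (Fin n → ℝ))) : Prop :=
  IsFlagOfCones n k C ∧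
  ∃ v : Fin (k + 1) → ℝ × (Fin n → ℝ), LinearIndependent ℝ v ∧ ∀ i ≤ k, C i = coneGenUpTo v i

/-- A `Γ`-admissible cone in `ℝ≥0 × ℝⁿ`. -/
def IsGammaAdmissibleCone {n : ℕ} (Γ : AddSubgroup ℝ) (D : Set (ℝ × (Fin n → ℝ))) : Prop :=
  ∃ q : ℕ, ∃ γ : Fin q → ℝ, ∃ u : Fin q → (Fin n → ℤ), (∀ l, γ l ∈ Γ) ∧
    D = {w | 0 ≤ w.1 ∧ ∀ l, w.1 * γ l + pairZ w.2 (u l) ≤ 0}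

/-- A `Γ`-rational polyhedron in `ℝⁿ`. -/
def IsGammaRatPolyhedron {n : ℕ} (Γ : AddSubgroup ℝ) (Q : Set (Fin n → ℝ)) : Prop :=
  ∃ q : ℕ, ∃ u : Fin q → (Fin n → ℤ), ∃ γ : Fin q → ℝ, (∀ l, γ l ∈ Γ) ∧
    Q = {x | ∀ l, pairZ x (u l) ≤ γ l}

/-- A polyhedron in `ℝⁿ`: a finite intersection of closed affine half-spaces. -/
def IsPolyhedron {n : ℕ} (P : Set (Fin n → ℝ)) : Prop :=
  ∃ q : ℕ, ∃ a : Fin q → (Fin n → ℝ), ∃ b : Fin q → ℝ,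
    P = {x | ∀ l, ∑ i, a l i * x i ≤ b l}

/-- A set containing no affine line. -/
def HasNoLine {n : ℕ} (P : Set (Fin n → ℝ)) : Prop :=
  ¬ ∃ x d : Fin n → ℝ, d ≠ 0 ∧ ∀ t : ℝ, x + t • d ∈ P

/-- The dimension of a polyhedron: the dimension of its affine span. -/
def polyDim {n : ℕ} (P : Set (Fin n → ℝ)) : ℕ :=
  Module.finrank ℝ (affineSpan ℝ P).direction

/-- A flag of polyhedra `P 0 ⊆ ⋯ ⊆ P k` in `ℝⁿ`: nonempty polyhedra containing no affine
line, with `dim (P i) = i`. -/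
def IsFlagOfPolyhedra (n k : ℕ) (P : ℕ → Set (Fin n → ℝ)) : Prop :=
  (∀ i ≤ k, (P i).Nonempty ∧ IsPolyhedron (P i) ∧ HasNoLine (P i) ∧ polyDim (P i) = i) ∧
  (∀ i, i + 1 ≤ k → P i ⊆ P (i + 1))

/-- The closed cone over a subset of `ℝⁿ`. -/
def closedConeOver {n : ℕ} (P : Set (Fin n → ℝ)) : Set (ℝ × (Fin n → ℝ)) :=
  closure {w : ℝ × (Fin n → ℝ) | ∃ l : ℝ, ∃ x ∈ P, 0 < l ∧ w = (l, l • x)}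

/-- A `Γ`-rational polyhedral set: a finite union of `Γ`-rational polyhedra. -/
def IsGammaRatPolyhedralSet {n : ℕ} (Γ : AddSubgroup ℝ) (U : Set (Fin n → ℝ)) : Prop :=
  ∃ m : ℕ, ∃ Q : Fin m → Set (Fin n → ℝ), (∀ j, IsGammaRatPolyhedron Γ (Q j)) ∧ U = ⋃ j, Q j

/-- A `Γ`-rational polytope: a bounded `Γ`-rational polyhedron. -/
def IsGammaRatPolytope {n : ℕ} (Γ : AddSubgroup ℝ) (Q : Set (Fin n → ℝ)) : Prop :=
  IsGammaRatPolyhedron Γ Q ∧ Bornology.IsBounded Q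

/-- A `Γ`-rational polytopal set: a finite union of `Γ`-rational polytopes. -/
def IsGammaRatPolytopalSet {n : ℕ} (Γ : AddSubgroup ℝ) (U : Set (Fin n → ℝ)) : Prop :=
  ∃ m : ℕ, ∃ Q : Fin m → Set (Fin n → ℝ), (∀ j, IsGammaRatPolytope Γ (Q j)) ∧ U = ⋃ j, Q j

/-- A prime filter on a lattice `L` of sets (ordered by inclusion, with meet = intersection
and join = union). -/
def IsPrimeFilterOn {α : Type*} (L : Set (Set α)) (F : Set (Set α)) : Prop :=
  F ⊆ L ∧ F.Nonempty ∧ F ≠ L ∧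
  (∀ U ∈ F, ∀ V ∈ L, U ⊆ V → V ∈ F) ∧
  (∀ U ∈ F, ∀ V ∈ F, U ∩ V ∈ F) ∧
  (∀ U ∈ L, ∀ V ∈ L, U ∪ V ∈ F → U ∈ F ∨ V ∈ F)

/-- `D` is a `Γ`-admissible neighborhood of the flag of cones `C 0 ⊆ ⋯ ⊆ C k`. -/
def IsGammaAdmNbhd {n : ℕ} (Γ : AddSubgroup ℝ) (k : ℕ) (C : ℕ → Set (ℝ × (Fin n → ℝ)))
    (D : Set (ℝ × (Fin n → ℝ))) : Prop :=
  IsGammaAdmissibleCone Γ D ∧ ∀ i ≤ k, (D ∩ intrinsicInterior ℝ (C i)).Nonempty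

/-- `Q` is a `Γ`-rational neighborhood of the flag of polyhedra `P 0 ⊆ ⋯ ⊆ P k`. -/
def IsGammaRatNbhd {n : ℕ} (Γ : AddSubgroup ℝ) (k : ℕ) (P : ℕ → Set (Fin n → ℝ))
    (Q : Set (Fin n → ℝ)) : Prop :=
  IsGammaRatPolyhedron Γ Q ∧ ∀ i ≤ k, (Q ∩ intrinsicInterior ℝ (P i)).Nonempty

/-- The lexicographic comparison of pairings against points `w 0, …, w k`. -/
def lexRel (n k : ℕ) (w : ℕ → ℝ × (Fin n → ℝ)) (a b : ℝ × (Fin n → ℝ)) : Prop :=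
  toLex (fun i : Fin (k + 1) => pairE (w i) a) ≤ toLex (fun i : Fin (k + 1) => pairE (w i) b)

/-- The embedding of `Γ × ℤⁿ` into `ℝ × ℝⁿ`. -/
def embGZ {n : ℕ} (Γ : AddSubgroup ℝ) (a : Γ × (Fin n → ℤ)) : ℝ × (Fin n → ℝ) :=
  ((a.1 : ℝ), fun i => (a.2 i : ℝ))

/-- The preorder on `Γ × ℤⁿ` associated to a (simplicial flag of cones with) chosen points
`w 0, …, w k`. -/
def flagRel (n k : ℕ) (Γ : AddSubgroup ℝ) (w : ℕ → ℝ × (Fin n → ℝ))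
    (a b : Γ × (Fin n → ℤ)) : Prop :=
  lexRel n k w (embGZ Γ a) (embGZ Γ b)

/-- `w` is a choice of points for the flag `C`: `w i ∈ C i \ C (i-1)` for `i ≤ k`. -/
def IsChoiceOfPoints (n k : ℕ) (C : ℕ → Set (ℝ × (Fin n → ℝ)))
    (w : ℕ → ℝ × (Fin n → ℝ)) : Prop :=
  ∀ i ≤ k, w i ∈ C i \ flagPrev C i

/-- A valuated monomial preorder on `Γ × ℤⁿ`. -/
def IsValuatedMonomialPreorder {n : ℕ} (Γ : AddSubgroup ℝ)
    (r : (Γ × (Fin n → ℤ)) → (Γ × (Fin n → ℤ)) → Prop) : Prop :=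
  (∀ a, r a a) ∧ (∀ a b c, r a b → r b c → r a c) ∧ (∀ a b, r a b ∨ r b a) ∧
  (∀ a b c, r a b → r (a + c) (b + c)) ∧
  (∀ α β : Γ, (α : ℝ) ≤ (β : ℝ) → r (α, 0) (β, 0))

/-- A Chan–Maclagan preorder on `Γ × ℤⁿ`. -/
def IsChanMaclaganPreorder {n : ℕ} (Γ : AddSubgroup ℝ)
    (r : (Γ × (Fin n → ℤ)) → (Γ × (Fin n → ℤ)) → Prop) : Prop :=
  IsValuatedMonomialPreorder Γ r ∧ ∀ a, ∃ β : Γ, r (β, 0) a ∧ ¬ r a (β, 0)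

/-!
Let `f j` be linear functionals dual to the linearly independent `v j`. A point `x` lies in the
relative interior of `P i` exactly when the coefficients `f j (1, x)`, `j ≤ i`, of
`(1, x) = ∑ j ≤ i, f j (1, x) • v j` are all positive. For (b) ⇒ (a) take the inequalities
defining `U` itself: if `j` is the first index with `⟨v j, 𝔲⟩ ≠ 0` and this pairing were
positive, a point `x ∈ U` in the relative interior of `P j` would give
`⟨(1, x), 𝔲⟩ = f j (1, x) ⟨v j, 𝔲⟩ > 0`. For (a) ⇒ (b), the point `∑ j ≤ i, ε ^ j • v j`,
rescaled to height one, lies in the relative interior of `P i`, and for small `ε > 0` it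
pairs nonpositively with every lexicographically nonpositive `𝔲`.
-/

open Filter Topology

theorem LinearIndependent.exists_dual_family {K V ι : Type*} [Field K] [AddCommGroup V]
    [Module K V] [DecidableEq ι] {v : ι → V} (hv : LinearIndependent K v) :
    ∃ f : ι → V →ₗ[K] K, ∀ j i, f j (v i) = if i = j then 1 else 0 := by
  choose f hf using fun j => LinearMap.exists_extend ((Finsupp.lapply j) ∘ₗ hv.repr)
  refine ⟨f, fun j i => ?_⟩
  have hvi : v i ∈ Submodule.span K (Set.range v) := Submodule.subset_span (Set.mem_range_self i)
  have := LinearMap.congr_fun (hf j) ⟨v i, hvi⟩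
  simpa [hv.repr_eq_single i ⟨v i, hvi⟩ rfl, Finsupp.single_apply] using this

section Pairing

variable {n : ℕ}

def pairELeft (a : ℝ × (Fin n → ℝ)) : (ℝ × (Fin n → ℝ)) →ₗ[ℝ] ℝ where
  toFun w := pairE w a
  map_add' x y := by
    simp only [pairE, Prod.fst_add, Prod.snd_add, Pi.add_apply, add_mul, sum_add_distrib]
    ring
  map_smul' c x := by
    simp only [pairE, Prod.smul_fst, Prod.smul_snd, Pi.smul_apply, smul_eq_mul,
      RingHom.id_apply, mul_add, mul_sum, mul_assoc]

@[simp]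
theorem pairELeft_apply (a w : ℝ × (Fin n → ℝ)) : pairELeft a w = pairE w a := rfl

theorem pairE_smul_left (c : ℝ) (w a : ℝ × (Fin n → ℝ)) :
    pairE (c • w) a = c * pairE w a :=
  map_smul (pairELeft a) c w

theorem pairE_sum_smul_left {ι : Type*} [Fintype ι] (c : ι → ℝ) (w : ι → ℝ × (Fin n → ℝ))
    (a : ℝ × (Fin n → ℝ)) : pairE (∑ j, c j • w j) a = ∑ j, c j * pairE (w j) a := by
  rw [← pairELeft_apply, map_sum]
  simp only [map_smul, pairELeft_apply, smul_eq_mul]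

theorem pairE_one_left (x : Fin n → ℝ) (γ : ℝ) (u : Fin n → ℤ) :
    pairE (1, x) (γ, fun t => (u t : ℝ)) = γ + pairZ x u := by
  simp [pairE, pairZ]

end Pairing

theorem eventually_sum_pow_mul_nonpos {m : ℕ} {e : Fin m → ℝ} (he : toLex e ≤ toLex 0)
    (i : ℕ) :
    ∀ᶠ ε in 𝓝[>] (0 : ℝ), ∑ j : Fin m, (if (j : ℕ) ≤ i then ε ^ (j : ℕ) else 0) * e j ≤ 0 := by
  obtain he | ⟨j₀, hpre, hneg⟩ := he.eq_or_lt
  · simp [toLex.injective he]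
  have hpre : ∀ j < j₀, e j = 0 := hpre
  have hneg : e j₀ < 0 := hneg
  by_cases hij : i < j₀
  · refine Eventually.of_forall fun ε => (sum_eq_zero fun j _ => ?_).le
    split_ifs with hj
    · rw [hpre j (by omega), mul_zero]
    · rw [zero_mul]
  let q : ℝ → ℝ := fun ε => ∑ j : Fin m, (if (j : ℕ) ≤ i then ε ^ ((j : ℕ) - j₀) else 0) * e j
  have hfac : ∀ ε, ∑ j : Fin m, (if (j : ℕ) ≤ i then ε ^ (j : ℕ) else 0) * e j =
      ε ^ (j₀ : ℕ) * q ε := by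
    intro ε
    rw [mul_sum]
    refine sum_congr rfl fun j _ => ?_
    rcases lt_or_ge j j₀ with h | h
    · simp [hpre j h]
    · have hj : (j : ℕ) = j₀ + ((j : ℕ) - j₀) := by omega
      split_ifs
      · rw [← mul_assoc, ← pow_add, ← hj]
      · simp
  have hq0 : q 0 = e j₀ := by
    refine (sum_eq_single j₀ (fun j _ hj => ?_) (by simp)).trans (by simp [not_lt.mp hij])
    rcases lt_or_gt_of_ne hj with h | h
    · simp [hpre j h]
    · simp [Nat.sub_ne_zero_of_lt (show (j₀ : ℕ) < j from h)]
  have hq : Continuous q := continuous_finsetSum _ fun j _ => by split_ifs <;> fun_prop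
  filter_upwards [self_mem_nhdsWithin, nhdsWithin_le_nhds
    (hq.continuousAt.eventually_lt continuousAt_const (hq0 ▸ hneg))] with ε hε hqε
  rw [hfac]
  exact mul_nonpos_of_nonneg_of_nonpos (pow_nonneg (le_of_lt hε) _) hqε.le

section DualFamily

variable {V : Type*} [AddCommGroup V] [Module ℝ V] {r : ℕ} {v : Fin r → V}
  {f : Fin r → V →ₗ[ℝ] ℝ}

theorem dual_apply_sum_smul (hf : ∀ j i, f j (v i) = if i = j then 1 else 0) (c : Fin r → ℝ)
    (j : Fin r) : f j (∑ i, c i • v i) = c j := by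
  simp [hf]

theorem eq_sum_dual_smul_of_mem_span (hf : ∀ j i, f j (v i) = if i = j then 1 else 0)
    {s : Set (Fin r)} {w : V} (hw : w ∈ Submodule.span ℝ (v '' s)) :
    w = ∑ j, f j w • v j ∧ ∀ j ∉ s, f j w = 0 := by
  obtain ⟨c, hc, rfl⟩ := (Finsupp.mem_span_image_iff_linearCombination ℝ).mp hw
  rw [Finsupp.linearCombination_apply, Finsupp.sum_fintype _ _ (by simp)]
  simp only [dual_apply_sum_smul hf, true_and]
  exact fun j hj => Finsupp.notMem_support_iff.mp fun h => hj (hc h)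

theorem coneGenUpTo_subset_span (i : ℕ) :
    coneGenUpTo v i ⊆ Submodule.span ℝ (v '' {j | (j : ℕ) ≤ i}) := by
  rintro _ ⟨c, -, hc, rfl⟩
  refine Submodule.sum_mem _ fun j _ => ?_
  rcases le_or_gt (j : ℕ) i with h | h
  · exact Submodule.smul_mem _ _ (Submodule.subset_span ⟨j, h, rfl⟩)
  · simp [hc j h]

theorem mem_coneGenUpTo_iff (hf : ∀ j i, f j (v i) = if i = j then 1 else 0) {i : ℕ} {w : V} :
    w ∈ coneGenUpTo v i ↔
      w = ∑ j, f j w • v j ∧ (∀ j, 0 ≤ f j w) ∧ ∀ j : Fin r, i < j → f j w = 0 := by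
  constructor
  · rintro ⟨c, hc0, hc, rfl⟩
    simp only [dual_apply_sum_smul hf, true_and]
    exact ⟨hc0, hc⟩
  · rintro ⟨hw, hw0, hwi⟩
    exact ⟨_, hw0, hwi, hw⟩

theorem mem_coneGenUpTo_of_mem_span (hf : ∀ j i, f j (v i) = if i = j then 1 else 0) {i : ℕ}
    {w : V} (hw : w ∈ Submodule.span ℝ (v '' {j | (j : ℕ) ≤ i}))
    (hw0 : ∀ j : Fin r, (j : ℕ) ≤ i → 0 ≤ f j w) : w ∈ coneGenUpTo v i := by
  obtain ⟨hsum, hwi⟩ := eq_sum_dual_smul_of_mem_span hf hw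
  refine (mem_coneGenUpTo_iff hf).mpr ⟨hsum, fun j => ?_, fun j hj => hwi j (not_le.mpr hj)⟩
  rcases le_or_gt (j : ℕ) i with h | h
  · exact hw0 j h
  · exact (hwi j (not_le.mpr h)).ge

theorem smul_mem_coneGenUpTo {i : ℕ} {c : ℝ} (hc : 0 ≤ c) {w : V} (hw : w ∈ coneGenUpTo v i) :
    c • w ∈ coneGenUpTo v i := by
  obtain ⟨lam, hlam0, hlami, rfl⟩ := hw
  refine ⟨c • lam, fun j => mul_nonneg hc (hlam0 j), fun j hj => by simp [hlami j hj], ?_⟩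
  simp [smul_sum, smul_smul]

end DualFamily

section IntrinsicInterior

variable {E : Type*} [AddCommGroup E] [Module ℝ E] [TopologicalSpace E] {S T : Set E} {x : E}

theorem mem_intrinsicInterior_of_isOpen (hT : IsOpen T) (hxT : x ∈ T) (hx : x ∈ affineSpan ℝ S)
    (hTS : ∀ y ∈ affineSpan ℝ S, y ∈ T → y ∈ S) : x ∈ intrinsicInterior ℝ S :=
  mem_intrinsicInterior.mpr ⟨⟨x, hx⟩,
    mem_interior.mpr ⟨Subtype.val ⁻¹' T, fun y hy => hTS y y.2 hy,
      hT.preimage continuous_subtype_val, hxT⟩, rfl⟩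

theorem AffineMap.pos_of_mem_intrinsicInterior [IsTopologicalAddGroup E] [ContinuousSMul ℝ E]
    (φ : E →ᵃ[ℝ] ℝ) (hφS : ∀ y ∈ S, 0 ≤ φ y) {y : E} (hy : y ∈ S) (hφy : 0 < φ y)
    (hx : x ∈ intrinsicInterior ℝ S) : 0 < φ x := by
  obtain ⟨p, hp, rfl⟩ := mem_intrinsicInterior.mp hx
  refine (hφS p (intrinsicInterior_subset hx)).lt_of_ne fun hφp => ?_
  -- Moving from `y` through `p` and slightly beyond stays in `S`, where `φ` would turn negative.
  let c : ℝ → affineSpan ℝ S := fun t =>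
    ⟨lineMap y p t, AffineMap.lineMap_mem _ (subset_affineSpan ℝ S hy) p.2⟩
  have hc : Continuous c := AffineMap.lineMap_continuous.subtype_mk _
  have hc1 : c 1 = p := Subtype.ext (lineMap_apply_one _ _)
  have hmem : ∀ᶠ t in 𝓝 1, c t ∈ interior (Subtype.val ⁻¹' S) :=
    hc.continuousAt.preimage_mem_nhds (hc1 ▸ isOpen_interior.mem_nhds hp)
  obtain ⟨t, ht, ht1⟩ := ((hmem.filter_mono nhdsWithin_le_nhds).and
    (self_mem_nhdsWithin (s := Set.Ioi 1))).exists
  have := hφS (c t) (interior_subset (s := Subtype.val ⁻¹' S) ht)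
  rw [AffineMap.apply_lineMap, ← hφp, lineMap_apply_ring] at this
  nlinarith [show (1 : ℝ) < t from ht1]

end IntrinsicInterior

section Slice

variable (E : Type*) [NormedAddCommGroup E] [NormedSpace ℝ E]

def homogenize : E →ᵃ[ℝ] ℝ × E where
  toFun x := (1, x)
  linear := LinearMap.inr ℝ ℝ E
  map_vadd' x w := by simp [vadd_eq_add]

variable {E}

@[simp]
theorem homogenize_apply (x : E) : homogenize E x = (1, x) := rfl

theorem homogenize_snd_inv_smul {w : ℝ × E} (hw : w.1 ≠ 0) :
    homogenize E (w.1⁻¹ • w).2 = w.1⁻¹ • w :=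
  Prod.ext (by simp [inv_mul_cancel₀ hw]) rfl

theorem dual_pos_of_mem_intrinsicInterior {k : ℕ} {v : Fin (k + 1) → ℝ × E}
    {f : Fin (k + 1) → (ℝ × E) →ₗ[ℝ] ℝ} (hf : ∀ j i, f j (v i) = if i = j then 1 else 0)
    (hv0 : 0 < (v 0).1) (hvpos : ∀ j, 0 ≤ (v j).1) {i : Fin (k + 1)} {x : E}
    (hx : x ∈ intrinsicInterior ℝ (homogenize E ⁻¹' coneGenUpTo v i)) :
    0 < f i (homogenize E x) := by
  set w := v 0 + v i
  have hw1 : 0 < w.1 := add_pos_of_pos_of_nonneg hv0 (hvpos i)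
  have hfw : ∀ j, f j w = (if 0 = j then 1 else 0) + if i = j then 1 else 0 := by
    simp [w, hf]
  have hw : w ∈ coneGenUpTo v i := by
    refine mem_coneGenUpTo_of_mem_span hf (Submodule.add_mem _ (Submodule.subset_span
      ⟨0, Nat.zero_le _, rfl⟩) (Submodule.subset_span ⟨i, le_refl (i : ℕ), rfl⟩)) fun j _ => ?_
    rw [hfw]
    positivity
  have hy := homogenize_snd_inv_smul hw1.ne'
  refine ((f i).toAffineMap.comp (homogenize E)).pos_of_mem_intrinsicInterior
    (S := homogenize E ⁻¹' coneGenUpTo v i) (fun y hy => ((mem_coneGenUpTo_iff hf).mp hy).2.1 i)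
    (y := (w.1⁻¹ • w).2) ?_ ?_ hx
  · rw [Set.mem_preimage, hy]
    exact smul_mem_coneGenUpTo (inv_nonneg.mpr hw1.le) hw
  · simp only [AffineMap.coe_comp, LinearMap.coe_toAffineMap, Function.comp_apply, hy,
      map_smul, hfw, smul_eq_mul, if_true]
    positivity

variable [FiniteDimensional ℝ E] {r : ℕ} {v : Fin r → ℝ × E} {f : Fin r → (ℝ × E) →ₗ[ℝ] ℝ}

theorem mem_intrinsicInterior_of_dual_pos (hf : ∀ j i, f j (v i) = if i = j then 1 else 0)
    {i : ℕ} {x : E} (hx : homogenize E x ∈ coneGenUpTo v i)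
    (hpos : ∀ j : Fin r, (j : ℕ) ≤ i → 0 < f j (homogenize E x)) :
    x ∈ intrinsicInterior ℝ (homogenize E ⁻¹' coneGenUpTo v i) := by
  refine mem_intrinsicInterior_of_isOpen (T := {y | ∀ j : Fin r, (j : ℕ) ≤ i → 0 < f j (1, y)})
    ?_ hpos (subset_affineSpan ℝ _ hx) fun y hy hyT => ?_
  · simp only [Set.ofPred_forall]
    exact isOpen_iInter_of_finite fun j => isOpen_iInter_of_finite fun _ =>
      isOpen_lt continuous_const
        ((f j).continuous_of_finiteDimensional.comp (continuous_const.prodMk continuous_id))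
  · have hspan : affineSpan ℝ (homogenize E ⁻¹' coneGenUpTo v i) ≤
        (Submodule.span ℝ (v '' {j | (j : ℕ) ≤ i})).toAffineSubspace.comap (homogenize E) :=
      affineSpan_le.mpr fun z hz => coneGenUpTo_subset_span i hz
    exact mem_coneGenUpTo_of_mem_span hf (hspan hy) fun j hj => (hyT j hj).le

end Slice

section Flag

variable {n k : ℕ} {v : Fin (k + 1) → ℝ × (Fin n → ℝ)}

theorem exists_mem_intrinsicInterior_forall_pairE_nonpos (hv : LinearIndependent ℝ v)
    (hv0 : 0 < (v 0).1) (hvpos : ∀ j, 0 ≤ (v j).1) {q : ℕ} {a : Fin q → ℝ × (Fin n → ℝ)}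
    (ha : ∀ l, toLex (fun j => pairE (v j) (a l)) ≤ toLex 0) (i : ℕ) :
    ∃ x ∈ intrinsicInterior ℝ (homogenize _ ⁻¹' coneGenUpTo v i),
      ∀ l, pairE (homogenize _ x) (a l) ≤ 0 := by
  obtain ⟨f, hf⟩ := hv.exists_dual_family
  obtain ⟨ε, hε, hε0⟩ := ((eventually_all.mpr fun l => eventually_sum_pow_mul_nonpos (ha l) i).and
    (self_mem_nhdsWithin (s := Set.Ioi 0))).exists
  set c : Fin (k + 1) → ℝ := fun j => if (j : ℕ) ≤ i then ε ^ (j : ℕ) else 0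
  have hc : ∀ j : Fin (k + 1), (j : ℕ) ≤ i → 0 < c j := fun j hj => by
    simp only [c, if_pos hj]
    exact pow_pos hε0 _
  have hc0 : ∀ j, 0 ≤ c j := fun j => by
    simp only [c]
    split_ifs <;> positivity
  set w := ∑ j, c j • v j
  have hw1 : 0 < w.1 :=
    calc 0 < c 0 * (v 0).1 := mul_pos (hc 0 (Nat.zero_le _)) hv0
      _ ≤ ∑ j, c j * (v j).1 :=
        single_le_sum (f := fun j => c j * (v j).1)
          (fun j _ => mul_nonneg (hc0 j) (hvpos j)) (mem_univ 0)
      _ = w.1 := by simp [w, Prod.fst_sum]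
  have hx := homogenize_snd_inv_smul hw1.ne'
  refine ⟨(w.1⁻¹ • w).2, mem_intrinsicInterior_of_dual_pos hf ?_ fun j hj => ?_, fun l => ?_⟩
  · rw [hx]
    exact smul_mem_coneGenUpTo (inv_nonneg.mpr hw1.le)
      ⟨c, hc0, fun j hj => if_neg (not_le.mpr hj), rfl⟩
  · rw [hx, map_smul, dual_apply_sum_smul hf, smul_eq_mul]
    exact mul_pos (inv_pos.mpr hw1) (hc j hj)
  · rw [hx, pairE_smul_left, pairE_sum_smul_left]
    exact mul_nonpos_of_nonneg_of_nonpos (inv_nonneg.mpr hw1.le) (hε l)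

theorem toLex_pairE_le_zero_of_exists_mem_intrinsicInterior (hv : LinearIndependent ℝ v)
    (hv0 : 0 < (v 0).1) (hvpos : ∀ j, 0 ≤ (v j).1) {a : ℝ × (Fin n → ℝ)}
    (h : ∀ i ≤ k, ∃ x ∈ intrinsicInterior ℝ (homogenize _ ⁻¹' coneGenUpTo v i),
      pairE (homogenize _ x) a ≤ 0) :
    toLex (fun j => pairE (v j) a) ≤ toLex 0 := by
  obtain ⟨f, hf⟩ := hv.exists_dual_family
  by_contra hlt
  obtain ⟨i, hpre, hi⟩ := not_le.mp hlt
  have hpre : ∀ j < i, pairE (v j) a = 0 := fun j hj => (hpre j hj).symm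
  have hi : 0 < pairE (v i) a := hi
  obtain ⟨x, hx, hxa⟩ := h i (Nat.lt_succ_iff.mp i.isLt)
  have hxP : x ∈ homogenize _ ⁻¹' coneGenUpTo v i := intrinsicInterior_subset hx
  obtain ⟨hsum, -, hzero⟩ := (mem_coneGenUpTo_iff hf).mp hxP
  have hxa' : pairE (homogenize _ x) a = f i (homogenize _ x) * pairE (v i) a := by
    conv_lhs => rw [hsum]
    rw [pairE_sum_smul_left]
    refine sum_eq_single i (fun j _ hj => ?_) (by simp)
    rcases lt_or_gt_of_ne hj with h | h
    · rw [hpre j h, mul_zero]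
    · rw [hzero j h, zero_mul]
  exact (mul_pos (dual_pos_of_mem_intrinsicInterior hf hv0 hvpos hx) hi).not_ge (hxa' ▸ hxa)

end Flag

theorem mem_polyhedron_filter_iff_rational_nbhd_general
    (n k : ℕ) (Γ : AddSubgroup ℝ)
    (v : Fin (k + 1) → ℝ × (Fin n → ℝ)) (hv : LinearIndependent ℝ v)
    (hvpos : ∀ i, 0 ≤ (v i).1) (hv0 : 0 < (v 0).1)
    (P : ℕ → Set (Fin n → ℝ))
    (hP : ∀ i, P i = {x : Fin n → ℝ | ((1 : ℝ), x) ∈ coneGenUpTo v i})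
    (U : Set (Fin n → ℝ)) (hU : IsGammaRatPolyhedron Γ U) :
    (∃ q : ℕ, ∃ γ : Fin q → ℝ, ∃ u : Fin q → (Fin n → ℤ), (∀ l, γ l ∈ Γ) ∧
      (∀ l, toLex (fun i : Fin (k + 1) => pairE (v i) (γ l, fun t => (u l t : ℝ))) ≤
        toLex (0 : Fin (k + 1) → ℝ)) ∧
      {x : Fin n → ℝ | ∀ l, γ l + pairZ x (u l) ≤ 0} ⊆ U) ↔
    (∀ i ≤ k, (U ∩ intrinsicInterior ℝ (P i)).Nonempty) := by
  obtain rfl : P = fun i => homogenize _ ⁻¹' coneGenUpTo v i := funext hP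
  obtain ⟨q, uU, γU, hγU, rfl⟩ := hU
  constructor
  · rintro ⟨q, γ, u, -, hlex, hsub⟩ i -
    obtain ⟨x, hx, hxa⟩ := exists_mem_intrinsicInterior_forall_pairE_nonpos hv hv0 hvpos hlex i
    exact ⟨x, hsub fun l => pairE_one_left x (γ l) (u l) ▸ hxa l, hx⟩
  · intro hb
    refine ⟨q, -γU, uU, fun l => neg_mem (hγU l), fun l => ?_,
      fun x hx l => neg_add_nonpos_iff.mp (hx l)⟩
    refine toLex_pairE_le_zero_of_exists_mem_intrinsicInterior hv hv0 hvpos fun i hi => ?_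
    obtain ⟨x, hxU, hx⟩ := hb i hi
    exact ⟨x, hx, (pairE_one_left x _ _).trans_le (neg_add_nonpos_iff.mpr (hxU l))⟩

/-- For a simplicial flag of cones generated by linearly independent
`v 0, …, v k` in `ℝ≥0 × ℝⁿ` with `(v 0).1 > 0`, the corresponding flag of polyhedra
`P i = {x | (1,x) ∈ C i}`, and a `Γ`-rational polyhedron `U`, the following are equivalent:
(a) `U` contains a finite intersection of `Γ`-rational half-spaces `{γ l + ⟨·,u l⟩ ≤ 0}`
with each `(⟨v 0,(γ l,u l)⟩,…,⟨v k,(γ l,u l)⟩) ≤_lex 0`; (b) `U` meets the relative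
interior of every `P i`. -/
theorem mem_polyhedron_filter_iff_rational_nbhd
    (n k : ℕ) (hn : 1 ≤ n) (Γ : AddSubgroup ℝ) (hΓ : Γ ≠ ⊥)
    (v : Fin (k + 1) → ℝ × (Fin n → ℝ)) (hv : LinearIndependent ℝ v)
    (hvpos : ∀ i, 0 ≤ (v i).1) (hv0 : 0 < (v 0).1)
    (P : ℕ → Set (Fin n → ℝ))
    (hP : ∀ i, P i = {x : Fin n → ℝ | ((1 : ℝ), x) ∈ coneGenUpTo v i})
    (U : Set (Fin n → ℝ)) (hU : IsGammaRatPolyhedron Γ U) :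
    (∃ q : ℕ, ∃ γ : Fin q → ℝ, ∃ u : Fin q → (Fin n → ℤ), (∀ l, γ l ∈ Γ) ∧
      (∀ l, toLex (fun i : Fin (k + 1) => pairE (v i) (γ l, fun t => (u l t : ℝ))) ≤
        toLex (0 : Fin (k + 1) → ℝ)) ∧
      {x : Fin n → ℝ | ∀ l, γ l + pairZ x (u l) ≤ 0} ⊆ U) ↔
    (∀ i ≤ k, (U ∩ intrinsicInterior ℝ (P i)).Nonempty) :=
  mem_polyhedron_filter_iff_rational_nbhd_general n k Γ v hv hvpos hv0 P hP U hU

end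
end

section
/- Let F be a prime filter on the lattice of Γ-rational polyhedral sets in ℝⁿ that contains a Γ-rational polytope. Define a relation ⪯_F on Γ×ℤⁿ by: (α,u) ⪯_F (β,λ) if and only if {x ∈ ℝⁿ : α + ⟨x,u⟩ ≤ β + ⟨x,λ⟩} ∈ F. Then ⪯_F is a Chan–Maclagan preorder on Γ×ℤⁿ; that is: (1) ⪯_F is a total preorder; (2) 𝔲 ⪯_F 𝔳 implies 𝔲+𝔴 ⪯_F 𝔳+𝔴 for all 𝔴 ∈ Γ×ℤⁿ; (3) (α,0) ⪯_F (β,0) whenever α ≤ β in Γ; and (4) for every 𝔲 ∈ Γ×ℤⁿ there exists β ∈ Γ with (β,0) ≺_F 𝔲 (i.e. (β,0) ⪯_F 𝔲 and not 𝔲 ⪯_F (β,0)). -/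
/-!
Every axiom of a valuated monomial preorder is an inclusion between the half-spaces
`{x | α + ⟨x,u⟩ ≤ β + ⟨x,λ⟩}`, which are `Γ`-rational polyhedra, and passes through the filter
axioms; totality is primality, as `{𝔲 ≤ 𝔳} ∪ {𝔳 ≤ 𝔲} = ℝⁿ`. For the last condition, the affine
function `x ↦ α + ⟨x,u⟩` is bounded below on a polytope `U ∈ F`, and a nontrivial subgroup of `ℝ`
is unbounded below, so some `β ∈ Γ` lies strictly below it on `U`: then `U ⊆ {β ≤ 𝔲}` puts
`(β,0) ⪯ 𝔲`, while `{𝔲 ≤ β} ∩ U = ∅ ∉ F` rules out `𝔲 ⪯ (β,0)`.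
-/

open Finset

noncomputable section

section PrimeFilter

variable {α : Type*} {L F : Set (Set α)} {U V : Set α}

theorem IsPrimeFilterOn.mem_of_subset (hF : IsPrimeFilterOn L F) (hU : U ∈ F) (hV : V ∈ L)
    (hUV : U ⊆ V) : V ∈ F :=
  hF.2.2.2.1 U hU V hV hUV

theorem IsPrimeFilterOn.inter_mem (hF : IsPrimeFilterOn L F) (hU : U ∈ F) (hV : V ∈ F) :
    U ∩ V ∈ F :=
  hF.2.2.2.2.1 U hU V hV

theorem IsPrimeFilterOn.mem_or_mem (hF : IsPrimeFilterOn L F) (hU : U ∈ L) (hV : V ∈ L)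
    (hUV : U ∪ V ∈ F) : U ∈ F ∨ V ∈ F :=
  hF.2.2.2.2.2 U hU V hV hUV

theorem IsPrimeFilterOn.univ_mem (hF : IsPrimeFilterOn L F) (hL : Set.univ ∈ L) :
    Set.univ ∈ F :=
  let ⟨_, hU⟩ := hF.2.1
  hF.mem_of_subset hU hL (Set.subset_univ _)

theorem IsPrimeFilterOn.empty_notMem (hF : IsPrimeFilterOn L F) : ∅ ∉ F := fun h =>
  hF.2.2.1 <| hF.1.antisymm fun V hV => hF.mem_of_subset h hV (Set.empty_subset V)

end PrimeFilter

theorem AddSubgroup.exists_mem_lt_of_ne_bot {G : Type*} [AddCommGroup G] [LinearOrder G]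
    [IsOrderedAddMonoid G] [Archimedean G] {H : AddSubgroup G} (hH : H ≠ ⊥) (M : G) :
    ∃ g ∈ H, g < M := by
  obtain ⟨g, hg, hg0⟩ := H.bot_or_exists_ne_zero.resolve_left hH
  obtain ⟨k, hk⟩ := exists_lt_nsmul (abs_pos.2 hg0) (-M)
  exact ⟨-(k • |g|), neg_mem (nsmul_mem (abs_mem_iff.2 hg) k), neg_lt.2 hk⟩

theorem continuous_pairZ {n : ℕ} (u : Fin n → ℤ) : Continuous fun x => pairZ x u := by
  unfold pairZ
  fun_prop

theorem Bornology.IsBounded.exists_le_pairZ {n : ℕ} {U : Set (Fin n → ℝ)}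
    (hU : Bornology.IsBounded U) (u : Fin n → ℤ) : ∃ m, ∀ x ∈ U, m ≤ pairZ x u := by
  obtain ⟨m, hm⟩ := hU.isCompact_closure.bddBelow_image (continuous_pairZ u).continuousOn
  exact ⟨m, fun x hx => hm ⟨x, subset_closure hx, rfl⟩⟩

section TropicalMonomial

variable {n : ℕ} {Γ : AddSubgroup ℝ}

def tropMonomial (a : Γ × (Fin n → ℤ)) (x : Fin n → ℝ) : ℝ :=
  (a.1 : ℝ) + pairZ x a.2

def affineLeSet (a b : Γ × (Fin n → ℤ)) : Set (Fin n → ℝ) :=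
  {x | tropMonomial a x ≤ tropMonomial b x}

@[simp]
theorem mem_affineLeSet {a b : Γ × (Fin n → ℤ)} {x : Fin n → ℝ} :
    x ∈ affineLeSet a b ↔ tropMonomial a x ≤ tropMonomial b x :=
  Iff.rfl

theorem tropMonomial_add (a b : Γ × (Fin n → ℤ)) (x : Fin n → ℝ) :
    tropMonomial (a + b) x = tropMonomial a x + tropMonomial b x := by
  simp only [tropMonomial, Prod.fst_add, Prod.snd_add, AddSubgroup.coe_add, pairZ, Pi.add_apply,
    Int.cast_add, mul_add, Finset.sum_add_distrib]
  ring

theorem tropMonomial_const (β : Γ) (x : Fin n → ℝ) :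
    tropMonomial ((β, 0) : Γ × (Fin n → ℤ)) x = β := by
  simp [tropMonomial, pairZ]

theorem affineLeSet_self (a : Γ × (Fin n → ℤ)) : affineLeSet a a = Set.univ :=
  Set.eq_univ_of_forall fun _ => mem_affineLeSet.2 le_rfl

theorem affineLeSet_inter_subset (a b c : Γ × (Fin n → ℤ)) :
    affineLeSet a b ∩ affineLeSet b c ⊆ affineLeSet a c :=
  fun _ hx => mem_affineLeSet.2 (hx.1.trans hx.2)

theorem affineLeSet_union_affineLeSet (a b : Γ × (Fin n → ℤ)) :
    affineLeSet a b ∪ affineLeSet b a = Set.univ :=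
  Set.eq_univ_of_forall fun _ => (le_total _ _).imp mem_affineLeSet.2 mem_affineLeSet.2

theorem affineLeSet_add_right (a b c : Γ × (Fin n → ℤ)) :
    affineLeSet (a + c) (b + c) = affineLeSet a b := by
  ext x
  simp only [mem_affineLeSet, tropMonomial_add, add_le_add_iff_right]

theorem affineLeSet_const {α β : Γ} (hαβ : (α : ℝ) ≤ β) :
    affineLeSet ((α, 0) : Γ × (Fin n → ℤ)) (β, 0) = Set.univ :=
  Set.eq_univ_of_forall fun x => mem_affineLeSet.2 (by simpa only [tropMonomial_const] using hαβ)

theorem isGammaRatPolyhedron_affineLeSet (a b : Γ × (Fin n → ℤ)) :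
    IsGammaRatPolyhedron Γ (affineLeSet a b) := by
  refine ⟨1, fun _ => a.2 - b.2, fun _ => ((b.1 - a.1 : Γ) : ℝ), fun _ => (b.1 - a.1).2, ?_⟩
  ext x
  simp only [affineLeSet, tropMonomial, pairZ, Set.mem_ofPred_eq, forall_const, Pi.sub_apply,
    Int.cast_sub, mul_sub, Finset.sum_sub_distrib, AddSubgroup.coe_sub]
  constructor <;> intro h <;> linarith

theorem isGammaRatPolyhedralSet_of_isGammaRatPolyhedron {Q : Set (Fin n → ℝ)}
    (hQ : IsGammaRatPolyhedron Γ Q) : IsGammaRatPolyhedralSet Γ Q :=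
  ⟨1, fun _ => Q, fun _ => hQ, (Set.iUnion_const Q).symm⟩

theorem isGammaRatPolyhedralSet_affineLeSet (a b : Γ × (Fin n → ℤ)) :
    IsGammaRatPolyhedralSet Γ (affineLeSet a b) :=
  isGammaRatPolyhedralSet_of_isGammaRatPolyhedron (isGammaRatPolyhedron_affineLeSet a b)

theorem isGammaRatPolyhedralSet_univ : IsGammaRatPolyhedralSet Γ (Set.univ : Set (Fin n → ℝ)) :=
  affineLeSet_self (0 : Γ × (Fin n → ℤ)) ▸ isGammaRatPolyhedralSet_affineLeSet 0 0

theorem isValuatedMonomialPreorder_affineLeSet_mem {F : Set (Set (Fin n → ℝ))}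
    (hF : IsPrimeFilterOn {U | IsGammaRatPolyhedralSet Γ U} F) :
    IsValuatedMonomialPreorder Γ fun a b => affineLeSet a b ∈ F := by
  have huniv : Set.univ ∈ F := hF.univ_mem isGammaRatPolyhedralSet_univ
  refine ⟨fun a => ?_, fun a b c hab hbc => ?_, fun a b => ?_, fun a b c hab => ?_,
    fun α β hαβ => ?_⟩
  · simpa only [affineLeSet_self] using huniv
  · exact hF.mem_of_subset (hF.inter_mem hab hbc) (isGammaRatPolyhedralSet_affineLeSet a c)
      (affineLeSet_inter_subset a b c)
  · refine hF.mem_or_mem (isGammaRatPolyhedralSet_affineLeSet a b)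
      (isGammaRatPolyhedralSet_affineLeSet b a) ?_
    rwa [affineLeSet_union_affineLeSet]
  · simpa only [affineLeSet_add_right] using hab
  · simpa only [affineLeSet_const hαβ] using huniv

theorem exists_const_lt_tropMonomial (hΓ : Γ ≠ ⊥) {U : Set (Fin n → ℝ)}
    (hU : Bornology.IsBounded U) (a : Γ × (Fin n → ℤ)) :
    ∃ β : Γ, ∀ x ∈ U, (β : ℝ) < tropMonomial a x := by
  obtain ⟨m, hm⟩ := hU.exists_le_pairZ a.2
  obtain ⟨β, hβΓ, hβ⟩ := AddSubgroup.exists_mem_lt_of_ne_bot hΓ (a.1 + m)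
  exact ⟨⟨β, hβΓ⟩, fun x hx => by simp only [tropMonomial]; linarith [hm x hx]⟩

end TropicalMonomial

theorem filter_relation_isChanMaclaganPreorder_general
    (n : ℕ) (Γ : AddSubgroup ℝ) (hΓ : Γ ≠ ⊥)
    (F : Set (Set (Fin n → ℝ)))
    (hF : IsPrimeFilterOn {U : Set (Fin n → ℝ) | IsGammaRatPolyhedralSet Γ U} F)
    (hpoly : ∃ U ∈ F, IsGammaRatPolytope Γ U)
    (r : (Γ × (Fin n → ℤ)) → (Γ × (Fin n → ℤ)) → Prop)
    (hr : ∀ a b : Γ × (Fin n → ℤ),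
      r a b ↔ {x : Fin n → ℝ | (a.1 : ℝ) + pairZ x a.2 ≤ (b.1 : ℝ) + pairZ x b.2} ∈ F) :
    IsChanMaclaganPreorder Γ r := by
  obtain rfl : r = fun a b => affineLeSet a b ∈ F := funext₂ fun a b => propext (hr a b)
  refine ⟨isValuatedMonomialPreorder_affineLeSet_mem hF, fun a => ?_⟩
  obtain ⟨U, hUF, -, hU⟩ := hpoly
  obtain ⟨β, hβ⟩ := exists_const_lt_tropMonomial hΓ hU a
  have hβU : U ⊆ affineLeSet (β, 0) a := fun x hx => by
    simpa only [mem_affineLeSet, tropMonomial_const] using (hβ x hx).le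
  have haβU : affineLeSet a (β, 0) ∩ U = ∅ := Set.eq_empty_of_forall_notMem fun x ⟨hle, hx⟩ => by
    simp only [mem_affineLeSet, tropMonomial_const] at hle
    exact (hβ x hx).not_ge hle
  exact ⟨β, hF.mem_of_subset hUF (isGammaRatPolyhedralSet_affineLeSet _ _) hβU,
    fun hle => hF.empty_notMem (haβU ▸ hF.inter_mem hle hUF)⟩

/-- The relation on `Γ × ℤⁿ` defined by a prime filter (containing a polytope)
on the lattice of `Γ`-rational polyhedral sets is a Chan–Maclagan preorder. -/
theorem filter_relation_isChanMaclaganPreorder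
    (n : ℕ) (hn : 1 ≤ n) (Γ : AddSubgroup ℝ) (hΓ : Γ ≠ ⊥)
    (F : Set (Set (Fin n → ℝ)))
    (hF : IsPrimeFilterOn {U : Set (Fin n → ℝ) | IsGammaRatPolyhedralSet Γ U} F)
    (hpoly : ∃ U ∈ F, IsGammaRatPolytope Γ U)
    (r : (Γ × (Fin n → ℤ)) → (Γ × (Fin n → ℤ)) → Prop)
    (hr : ∀ a b : Γ × (Fin n → ℤ),
      r a b ↔ {x : Fin n → ℝ | (a.1 : ℝ) + pairZ x a.2 ≤ (b.1 : ℝ) + pairZ x b.2} ∈ F) :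
    IsChanMaclaganPreorder Γ r :=
  filter_relation_isChanMaclaganPreorder_general n Γ hΓ F hF hpoly r hr
end
end
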